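/- Suppose the excess loss r is (ν², α)-sub-exponential under P_W ⊗ μ for some ν, α > 0, i.e. log ∫ exp(λ·(r − R)) d(P_W ⊗ μ) ≤ λ²ν²/2 for every λ with |λ| < 1/α, and suppose R = ∫ r d(P_W ⊗ μ) > 0. Then for every η with 0 < η < 1/α and η ≤ R/ν², the (η, 1/2)-central condition holds, i.e. log ∫ exp(−η·r) d(P_W ⊗ μ) ≤ −(η/2)·R, and consequently gen ≤ R̂ + (2/(η·n)) ∑_{i=1}^n I(W;Z_i). -/

import Mathlib

open MeasureTheory Real

/-- Real-valued Kullback–Leibler divergence `D(P‖Q)`,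
the integral of the log-likelihood ratio with respect to `P`. -/
noncomputable def klReal {α : Type*} [MeasurableSpace α] (P Q : Measure α) : ℝ :=
  ∫ x, llr P Q x ∂P

variable {W Z : Type*} [MeasurableSpace W] [MeasurableSpace Z]

/-- Population risk `L(w) = ∫ ℓ(w,z) dμ(z)`. -/
noncomputable def popRisk (μ : Measure Z) (ℓ : W × Z → ℝ) (w : W) : ℝ :=
  ∫ z, ℓ (w, z) ∂μ

/-- Empirical risk `L̂(w,s) = (1/n) ∑ i, ℓ(w, s i)`. -/
noncomputable def empRisk (n : ℕ) (ℓ : W × Z → ℝ) (w : W) (s : Fin n → Z) : ℝ :=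
  (1 / (n : ℝ)) * ∑ i, ℓ (w, s i)

/-- Expected generalization error `gen = E_P[L(W) − L̂(W,S_n)]`. -/
noncomputable def genErr (μ : Measure Z) (n : ℕ) (P : Measure (W × (Fin n → Z)))
    (ℓ : W × Z → ℝ) : ℝ :=
  ∫ p, (popRisk μ ℓ p.1 - empRisk n ℓ p.1 p.2) ∂P

/-- Expected empirical excess risk `R̂ = E_P[L̂(W,S_n) − L̂(w*,S_n)]`. -/
noncomputable def empExcess (n : ℕ) (P : Measure (W × (Fin n → Z)))
    (ℓ : W × Z → ℝ) (wstar : W) : ℝ :=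
  ∫ p, (empRisk n ℓ p.1 p.2 - empRisk n ℓ wstar p.2) ∂P

/-- Expected excess risk `R = ∫ r d(P_W ⊗ μ)` where `r(w,z) = ℓ(w,z) − ℓ(w*,z)`. -/
noncomputable def excessRisk (μ : Measure Z) {n : ℕ} (P : Measure (W × (Fin n → Z)))
    (ℓ : W × Z → ℝ) (wstar : W) : ℝ :=
  ∫ p, (ℓ p - ℓ (wstar, p.2)) ∂((P.map Prod.fst).prod μ)

/-- Joint law `P_i` of `(W, Z_i)`: the pushforward of `P` under `(w,z) ↦ (w, z_i)`. -/
noncomputable def jointLaw {n : ℕ} (P : Measure (W × (Fin n → Z))) (i : Fin n) :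
    Measure (W × Z) :=
  P.map fun p => (p.1, p.2 i)

/-- Mutual information `I(W;Z_i) = D(P_i ‖ P_W ⊗ μ)`. -/
noncomputable def mutInfo (μ : Measure Z) {n : ℕ} (P : Measure (W × (Fin n → Z)))
    (i : Fin n) : ℝ :=
  klReal (jointLaw P i) ((P.map Prod.fst).prod μ)

/-!
Write `r` for the excess loss and `Q = P_W ⊗ μ`. Since `cgf r Q (-η) = -η R + cgf (r - R) Q (-η)`,
the sub-exponential bound gives `cgf r Q (-η) ≤ -η R + η² ν² / 2 ≤ -η R / 2` once `η ν² ≤ R`: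
this is the central condition. The Donsker–Varadhan inequality for `P_i ≪ Q`, applied to `-η r`,
then turns it into `η (R / 2 - E_{P_i} r) ≤ I(W;Z_i)`; averaging over `i` bounds `R - 2 R̂`.
Finally `gen = R - R̂`, because each `Z_i` has law `μ`, so that `E L̂(w*, S_n) = L(w*)`.
-/

open ProbabilityTheory

instance isProbabilityMeasure_map_fst {α β : Type*} [MeasurableSpace α] [MeasurableSpace β] (ρ : Measure (α × β))
    [IsProbabilityMeasure ρ] : IsProbabilityMeasure (ρ.map Prod.fst) :=
  Measure.isProbabilityMeasure_map measurable_fst.aemeasurable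

instance isProbabilityMeasure_jointLaw {n : ℕ} (P : Measure (W × (Fin n → Z))) [IsProbabilityMeasure P] (i : Fin n) :
    IsProbabilityMeasure (jointLaw P i) :=
  Measure.isProbabilityMeasure_map (by fun_prop)

section Divergence

variable {Ω : Type*} [MeasurableSpace Ω] {P Q : Measure Ω}

lemma integrable_exp_mul_of_integrable_exp_mul_sub {X : Ω → ℝ} {t c : ℝ}
    (h : Integrable (fun x => exp (t * (X x - c))) Q) : Integrable (fun x => exp (t * X x)) Q := by
  refine (h.const_mul (exp (t * c))).congr (ae_of_all _ fun x => ?_)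
  dsimp only
  rw [← exp_add]
  ring_nf

variable [IsProbabilityMeasure P] [IsProbabilityMeasure Q]

lemma klReal_nonneg (hPQ : P ≪ Q) : 0 ≤ klReal P Q := by
  rw [klReal, ← InformationTheory.toReal_klDiv_of_measure_eq hPQ (by simp)]
  exact ENNReal.toReal_nonneg

lemma integral_le_klReal_add_log_integral_exp (hPQ : P ≪ Q) (hllr : Integrable (llr P Q) P)
    {f : Ω → ℝ} (hfP : Integrable f P) (hfQ : Integrable (fun x => exp (f x)) Q) :
    ∫ x, f x ∂P ≤ klReal P Q + log (∫ x, exp (f x) ∂Q) := by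
  have := isProbabilityMeasure_tilted hfQ
  have h := klReal_nonneg (hPQ.trans (absolutelyContinuous_tilted hfQ))
  rw [klReal, integral_llr_tilted_right hPQ hfP hfQ hllr] at h
  rw [klReal]
  linarith

lemma mul_integral_le_klReal_add_cgf (hPQ : P ≪ Q) (hllr : Integrable (llr P Q) P)
    {X : Ω → ℝ} (hXP : Integrable X P) {t : ℝ} (hXQ : Integrable (fun x => exp (t * X x)) Q) :
    t * ∫ x, X x ∂P ≤ klReal P Q + cgf X Q t := by
  rw [← integral_const_mul]
  exact integral_le_klReal_add_log_integral_exp hPQ hllr (hXP.const_mul t) hXQ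

lemma cgf_neg_le_of_cgf_sub_le {X : Ω → ℝ} {c η ν : ℝ}
    (hint : Integrable (fun x => exp (-η * (X x - c))) Q)
    (hcgf : cgf (fun x => X x - c) Q (-η) ≤ η ^ 2 * ν ^ 2 / 2) (hη : 0 ≤ η)
    (hην : η * ν ^ 2 ≤ c) :
    cgf X Q (-η) ≤ -(η / 2) * c := by
  have hsplit : cgf X Q (-η) = -η * c + cgf (fun x => X x - c) Q (-η) := by
    have hmgf := mgf_const_add (X := fun x => X x - c) (μ := Q) (t := -η) c
    simp only [add_sub_cancel] at hmgf
    rw [cgf, cgf, hmgf, log_mul (exp_pos _).ne' (mgf_pos hint).ne', log_exp]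
  rw [hsplit]
  nlinarith [mul_le_mul_of_nonneg_left hην hη]

lemma mul_half_sub_integral_le_klReal (hPQ : P ≪ Q) (hllr : Integrable (llr P Q) P)
    {X : Ω → ℝ} (hXP : Integrable X P) {c η : ℝ}
    (hXQ : Integrable (fun x => exp (-η * X x)) Q) (hcgf : cgf X Q (-η) ≤ -(η / 2) * c) :
    η * (c / 2 - ∫ x, X x ∂P) ≤ klReal P Q := by
  have := mul_integral_le_klReal_add_cgf hPQ hllr hXP hXQ
  linarith

end Divergence

def excessLoss (ℓ : W × Z → ℝ) (wstar : W) (p : W × Z) : ℝ :=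
  ℓ p - ℓ (wstar, p.2)

lemma empRisk_sub_empRisk {α β : Type*} (n : ℕ) (ℓ : α × β → ℝ) (w wstar : α) (s : Fin n → β) :
    empRisk n ℓ w s - empRisk n ℓ wstar s = empRisk n (excessLoss ℓ wstar) w s := by
  simp only [empRisk, excessLoss, Finset.sum_sub_distrib, mul_sub]

section Learning

variable {μ : Measure Z} {n : ℕ} {P : Measure (W × (Fin n → Z))}

lemma jointLaw_map_snd [IsProbabilityMeasure μ]
    (hmarg : P.map Prod.snd = Measure.pi fun _ : Fin n => μ) (i : Fin n) :
    (jointLaw P i).map Prod.snd = μ := by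
  rw [jointLaw, Measure.map_map measurable_snd (by fun_prop)]
  change P.map (Function.eval i ∘ Prod.snd) = μ
  rw [← Measure.map_map (measurable_pi_apply i) measurable_snd, hmarg,
    (measurePreserving_eval _ i).map_eq]

lemma integrable_jointLaw_comp_snd [IsProbabilityMeasure μ]
    (hmarg : P.map Prod.snd = Measure.pi fun _ : Fin n => μ) {g : Z → ℝ} (hg : Integrable g μ)
    (i : Fin n) : Integrable (fun p => g p.2) (jointLaw P i) :=
  ((jointLaw_map_snd hmarg i).symm ▸ hg).comp_measurable measurable_snd

lemma integral_jointLaw_comp_snd [IsProbabilityMeasure μ]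
    (hmarg : P.map Prod.snd = Measure.pi fun _ : Fin n => μ) {g : Z → ℝ} (hg : Integrable g μ)
    (i : Fin n) : ∫ p, g p.2 ∂(jointLaw P i) = ∫ z, g z ∂μ := by
  rw [← jointLaw_map_snd hmarg i] at hg ⊢
  exact (integral_map measurable_snd.aemeasurable hg.aestronglyMeasurable).symm

lemma integrable_comp_jointLaw {f : W × Z → ℝ} {i : Fin n} (hf : Integrable f (jointLaw P i)) :
    Integrable (fun p => f (p.1, p.2 i)) P :=
  hf.comp_measurable (by fun_prop)

lemma integrable_empRisk {f : W × Z → ℝ} (hf : ∀ i, Integrable f (jointLaw P i)) :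
    Integrable (fun p => empRisk n f p.1 p.2) P :=
  (integrable_finsetSum _ fun i _ => integrable_comp_jointLaw (hf i)).const_mul _

lemma integral_empRisk {f : W × Z → ℝ} (hf : ∀ i, Integrable f (jointLaw P i)) :
    ∫ p, empRisk n f p.1 p.2 ∂P = 1 / (n : ℝ) * ∑ i, ∫ q, f q ∂(jointLaw P i) := by
  simp only [empRisk]
  rw [integral_const_mul, integral_finsetSum _ fun i _ => integrable_comp_jointLaw (hf i)]
  congr 1
  refine Finset.sum_congr rfl fun i _ => ?_
  exact (integral_map (by fun_prop) (hf i).aestronglyMeasurable).symm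

lemma integral_empRisk_fixed [IsProbabilityMeasure μ] (hn : n ≠ 0)
    (hmarg : P.map Prod.snd = Measure.pi fun _ : Fin n => μ) {ℓ : W × Z → ℝ} {wstar : W}
    (hintw : Integrable (fun z => ℓ (wstar, z)) μ) :
    ∫ p, empRisk n ℓ wstar p.2 ∂P = ∫ z, ℓ (wstar, z) ∂μ := by
  refine (integral_empRisk (f := fun q => ℓ (wstar, q.2))
    (integrable_jointLaw_comp_snd hmarg hintw)).trans ?_
  simp only [integral_jointLaw_comp_snd hmarg hintw, Finset.sum_const, Finset.card_univ,
    Fintype.card_fin, nsmul_eq_mul]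
  field_simp

lemma integrable_popRisk_fst [SFinite μ] {ℓ : W × Z → ℝ}
    (hint : Integrable ℓ ((P.map Prod.fst).prod μ)) :
    Integrable (fun p => popRisk μ ℓ p.1) P :=
  hint.integral_prod_left.comp_measurable measurable_fst

lemma integral_popRisk_fst [SFinite μ] [IsFiniteMeasure P] {ℓ : W × Z → ℝ}
    (hint : Integrable ℓ ((P.map Prod.fst).prod μ)) :
    ∫ p, popRisk μ ℓ p.1 ∂P = ∫ q, ℓ q ∂((P.map Prod.fst).prod μ) := by
  rw [integral_prod ℓ hint,
    integral_map measurable_fst.aemeasurable hint.integral_prod_left.aestronglyMeasurable]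
  rfl

lemma empExcess_eq_avg_integral_excessLoss [IsProbabilityMeasure μ]
    (hmarg : P.map Prod.snd = Measure.pi fun _ : Fin n => μ) {ℓ : W × Z → ℝ} {wstar : W}
    (hinti : ∀ i, Integrable ℓ (jointLaw P i)) (hintw : Integrable (fun z => ℓ (wstar, z)) μ) :
    empExcess n P ℓ wstar = 1 / (n : ℝ) * ∑ i, ∫ q, excessLoss ℓ wstar q ∂(jointLaw P i) := by
  simp only [empExcess, empRisk_sub_empRisk]
  exact integral_empRisk fun i => (hinti i).sub (integrable_jointLaw_comp_snd hmarg hintw i)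

lemma genErr_eq_excessRisk_sub_empExcess [IsProbabilityMeasure μ] [IsProbabilityMeasure P]
    (hn : n ≠ 0) (hmarg : P.map Prod.snd = Measure.pi fun _ : Fin n => μ) {ℓ : W × Z → ℝ}
    {wstar : W} (hint : Integrable ℓ ((P.map Prod.fst).prod μ))
    (hinti : ∀ i, Integrable ℓ (jointLaw P i)) (hintw : Integrable (fun z => ℓ (wstar, z)) μ) :
    genErr μ n P ℓ = excessRisk μ P ℓ wstar - empExcess n P ℓ wstar := by
  have hemp := integrable_empRisk hinti
  have hempw : Integrable (fun p => empRisk n ℓ wstar p.2) P :=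
    integrable_empRisk (f := fun q => ℓ (wstar, q.2)) (integrable_jointLaw_comp_snd hmarg hintw)
  rw [genErr, empExcess, excessRisk, integral_sub (integrable_popRisk_fst hint) hemp,
    integral_sub hemp hempw, integral_sub hint (hintw.comp_snd _), integral_popRisk_fst hint,
    integral_empRisk_fixed hn hmarg hintw, integral_fun_snd (fun z => ℓ (wstar, z))]
  simp

end Learning

theorem subexponential_central_condition_general
    (μ : Measure Z) [IsProbabilityMeasure μ] (n : ℕ) (hn : 0 < n)
    (P : Measure (W × (Fin n → Z))) [IsProbabilityMeasure P]
    (hmarg : P.map Prod.snd = Measure.pi fun _ : Fin n => μ)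
    (ℓ : W × Z → ℝ) (wstar : W)
    (hint : Integrable ℓ ((P.map Prod.fst).prod μ))
    (hinti : ∀ i : Fin n, Integrable ℓ (jointLaw P i))
    (hintw : Integrable (fun z => ℓ (wstar, z)) μ)
    (hac : ∀ i : Fin n, jointLaw P i ≪ (P.map Prod.fst).prod μ)
    (hIfin : ∀ i : Fin n, Integrable (llr (jointLaw P i) ((P.map Prod.fst).prod μ))
      (jointLaw P i))
    (ν α : ℝ)
    (hR : 0 < excessRisk μ P ℓ wstar)
    (hsubInt : ∀ lam : ℝ, |lam| < 1 / α →
      Integrable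
        (fun p => Real.exp (lam * ((ℓ p - ℓ (wstar, p.2)) - excessRisk μ P ℓ wstar)))
        ((P.map Prod.fst).prod μ))
    (hsub : ∀ lam : ℝ, |lam| < 1 / α →
      Real.log (∫ p, Real.exp (lam * ((ℓ p - ℓ (wstar, p.2)) - excessRisk μ P ℓ wstar))
          ∂((P.map Prod.fst).prod μ)) ≤ lam ^ 2 * ν ^ 2 / 2) :
    ∀ η : ℝ, 0 < η → η < 1 / α → η ≤ excessRisk μ P ℓ wstar / ν ^ 2 →
      Real.log (∫ p, Real.exp (-η * (ℓ p - ℓ (wstar, p.2))) ∂((P.map Prod.fst).prod μ)) ≤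
          -(η / 2) * excessRisk μ P ℓ wstar ∧
      genErr μ n P ℓ ≤
        empExcess n P ℓ wstar + (2 / (η * (n : ℝ))) * ∑ i : Fin n, mutInfo μ P i := by
  intro η hη hηα hην
  set R := excessRisk μ P ℓ wstar
  have hlam : |-η| < 1 / α := by rwa [abs_neg, abs_of_pos hη]
  have hcentral : cgf (excessLoss ℓ wstar) ((P.map Prod.fst).prod μ) (-η) ≤ -(η / 2) * R :=
    cgf_neg_le_of_cgf_sub_le (hsubInt _ hlam) (neg_sq η ▸ hsub _ hlam) hη.le
      (mul_le_of_le_div₀ hR.le (sq_nonneg ν) hην)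
  refine ⟨hcentral, ?_⟩
  have hexp : Integrable (fun p => exp (-η * excessLoss ℓ wstar p)) ((P.map Prod.fst).prod μ) :=
    integrable_exp_mul_of_integrable_exp_mul_sub (hsubInt _ hlam)
  have hsample : ∀ i, η * (R / 2 - ∫ q, excessLoss ℓ wstar q ∂(jointLaw P i)) ≤ mutInfo μ P i :=
    fun i => mul_half_sub_integral_le_klReal (hac i) (hIfin i)
      ((hinti i).sub (integrable_jointLaw_comp_snd hmarg hintw i)) hexp hcentral
  rw [genErr_eq_excessRisk_sub_empExcess hn.ne' hmarg hint hinti hintw,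
    empExcess_eq_avg_integral_excessLoss hmarg hinti hintw]
  have hsum := Finset.sum_le_sum fun i (_ : i ∈ Finset.univ) => hsample i
  rw [← Finset.mul_sum, Finset.sum_sub_distrib, Finset.sum_const, Finset.card_univ,
    Fintype.card_fin, nsmul_eq_mul] at hsum
  have hn' : (0 : ℝ) < n := Nat.cast_pos.mpr hn
  field_simp
  linarith

theorem subexponential_central_condition
    (μ : Measure Z) [IsProbabilityMeasure μ] (n : ℕ) (hn : 0 < n)
    (P : Measure (W × (Fin n → Z))) [IsProbabilityMeasure P]
    (hmarg : P.map Prod.snd = Measure.pi fun _ : Fin n => μ)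
    (ℓ : W × Z → ℝ) (hℓ : Measurable ℓ) (wstar : W)
    (hint : Integrable ℓ ((P.map Prod.fst).prod μ))
    (hinti : ∀ i : Fin n, Integrable ℓ (jointLaw P i))
    (hintw : Integrable (fun z => ℓ (wstar, z)) μ)
    (hac : ∀ i : Fin n, jointLaw P i ≪ (P.map Prod.fst).prod μ)
    (hIfin : ∀ i : Fin n, Integrable (llr (jointLaw P i) ((P.map Prod.fst).prod μ))
      (jointLaw P i))
    (ν α : ℝ) (hν : 0 < ν) (hα : 0 < α)
    (hR : 0 < excessRisk μ P ℓ wstar)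
    (hsubInt : ∀ lam : ℝ, |lam| < 1 / α →
      Integrable
        (fun p => Real.exp (lam * ((ℓ p - ℓ (wstar, p.2)) - excessRisk μ P ℓ wstar)))
        ((P.map Prod.fst).prod μ))
    (hsub : ∀ lam : ℝ, |lam| < 1 / α →
      Real.log (∫ p, Real.exp (lam * ((ℓ p - ℓ (wstar, p.2)) - excessRisk μ P ℓ wstar))
          ∂((P.map Prod.fst).prod μ)) ≤ lam ^ 2 * ν ^ 2 / 2) :
    ∀ η : ℝ, 0 < η → η < 1 / α → η ≤ excessRisk μ P ℓ wstar / ν ^ 2 →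
      Real.log (∫ p, Real.exp (-η * (ℓ p - ℓ (wstar, p.2))) ∂((P.map Prod.fst).prod μ)) ≤
          -(η / 2) * excessRisk μ P ℓ wstar ∧
      genErr μ n P ℓ ≤
        empExcess n P ℓ wstar + (2 / (η * (n : ℝ))) * ∑ i : Fin n, mutInfo μ P i :=
  subexponential_central_condition_general μ n hn P hmarg ℓ wstar hint hinti hintw hac hIfin ν α hR
    hsubInt hsub
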